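/- With L as the sum of d independent geometric random variables with success probabilities 1 - 2^k/2^d for k = 0,...,d-1, the limit as d → ∞ of E(L) - d equals ∑_{k=1}^{∞} 1/(2^k - 1) ≈ 1.606. -/

import Mathlib

/-!
Since `a ^ d / (a ^ d - a ^ k) - 1 = 1 / (a ^ (d - k) - 1)`, reversing the order of summation
turns `E(L) - d` into the `d`-th partial sum of `∑ 1 / (2 ^ (k + 1) - 1)`, a series dominated
by a geometric one.
-/

open Filter Finset

section

variable {a : ℝ} (ha : 1 < a)
include ha

lemma pow_div_pow_sub_pow_sub_one {k d : ℕ} (hkd : k < d) :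
    a ^ d / (a ^ d - a ^ k) - 1 = 1 / (a ^ (d - k) - 1) := by
  have hsplit : a ^ d = a ^ k * a ^ (d - k) := by rw [← pow_add, Nat.add_sub_cancel' hkd.le]
  have hk : a ^ k ≠ 0 := by positivity
  have hdk : a ^ (d - k) - 1 ≠ 0 := (sub_pos.2 (one_lt_pow₀ ha (by omega))).ne'
  rw [hsplit]
  field_simp
  ring

lemma sum_pow_div_pow_sub_pow_sub_self (d : ℕ) :
    ∑ k ∈ range d, a ^ d / (a ^ d - a ^ k) - d = ∑ k ∈ range d, 1 / (a ^ (k + 1) - 1) := by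
  calc ∑ k ∈ range d, a ^ d / (a ^ d - a ^ k) - d
      = ∑ k ∈ range d, (a ^ d / (a ^ d - a ^ k) - 1) := by simp [sum_sub_distrib]
    _ = ∑ k ∈ range d, 1 / (a ^ (d - k) - 1) :=
        sum_congr rfl fun k hk => pow_div_pow_sub_pow_sub_one ha (mem_range.1 hk)
    _ = ∑ k ∈ range d, 1 / (a ^ (k + 1) - 1) := by
        rw [← sum_range_reflect]
        exact sum_congr rfl fun k hk => by
          rw [show d - (d - 1 - k) = k + 1 by have := mem_range.1 hk; omega]

lemma summable_one_div_pow_succ_sub_one : Summable fun k : ℕ => 1 / (a ^ (k + 1) - 1) := by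
  have hgeom : Summable fun k : ℕ => (a - 1)⁻¹ * a⁻¹ ^ k :=
    (summable_geometric_of_lt_one (by positivity) (inv_lt_one_of_one_lt₀ ha)).mul_left _
  refine Summable.of_nonneg_of_le (fun k => ?_) (fun k => ?_) hgeom
  · exact one_div_nonneg.2 (sub_nonneg.2 (one_le_pow₀ ha.le))
  · have hpow : 1 ≤ a ^ k := one_le_pow₀ ha.le
    -- `a ^ (k + 1) - 1 ≥ (a - 1) * a ^ k` because the difference is `a ^ k - 1`
    rw [inv_pow, ← mul_inv, one_div]
    gcongr
    rw [pow_succ]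
    nlinarith

end

/-- With `E(L) = ∑_{k=0}^{d-1} 2^d/(2^d - 2^k)` the expected number of draws of the greedy
row-selection process over GF(2), the limit as `d → ∞` of `E(L) - d` equals
`∑_{k=1}^{∞} 1/(2^k - 1)`. -/
theorem stmt_3 :
    Tendsto (fun d : ℕ => (∑ k ∈ Finset.range d, (2 : ℝ) ^ d / ((2 : ℝ) ^ d - 2 ^ k)) - d)
      atTop (nhds (∑' k : ℕ, (1 : ℝ) / (2 ^ (k + 1) - 1))) := by
  have h2 : (1 : ℝ) < 2 := one_lt_two
  simpa only [sum_pow_div_pow_sub_pow_sub_self h2] using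
    (summable_one_div_pow_succ_sub_one h2).hasSum.tendsto_sum_nat
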